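/- Define f : [0,∞) → ℝ by f(b) = b − √(2b²/(b²+2)). Then f is strictly increasing on [0,∞), and for every b with 0 < b ≤ 1 one has the two-sided cubic bound b³/8 ≤ f(b) ≤ b³/4. In particular, for every sufficiently small a > 0 the equation f(b) = a has a unique nonnegative solution b, and this solution satisfies (4a)^{1/3} ≤ b ≤ (8a)^{1/3}. -/

import Mathlib

/-!
Writing `f b = b * (1 - √(2 / (b ^ 2 + 2)))` exhibits `f` on `[0, ∞)` as a product of two
nonnegative increasing factors, the first strictly increasing. Rationalizing the square root gives
`f b = b ^ 3 / (b ^ 2 + 2 + √(2 * (b ^ 2 + 2)))`, whose denominator lies between `4` and `6` when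
`0 ≤ b ≤ 1`; this is the cubic bound. For `0 < a ≤ 1 / 8 ≤ f 1`, the intermediate value theorem
and strict monotonicity give a unique solution of `f b = a`, which lies in `[0, 1]`, and the
cubic bound then pins `b ^ 3` between `4 * a` and `8 * a`.
-/

noncomputable def fStat (b : ℝ) : ℝ := b - Real.sqrt (2 * b ^ 2 / (b ^ 2 + 2))

open Real Set

lemma fStat_eq_mul {b : ℝ} (hb : 0 ≤ b) : fStat b = b * (1 - √(2 / (b ^ 2 + 2))) := by
  rw [fStat, mul_comm 2, mul_div_assoc, sqrt_mul (sq_nonneg b), sqrt_sq hb]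
  ring

lemma sqrt_two_div_sq_add_two_lt {x y : ℝ} (hx : 0 ≤ x) (hxy : x < y) :
    √(2 / (y ^ 2 + 2)) < √(2 / (x ^ 2 + 2)) :=
  sqrt_lt_sqrt (by positivity) <| div_lt_div_of_pos_left two_pos (by positivity) (by gcongr)

theorem fStat_strictMonoOn : StrictMonoOn fStat (Ici 0) := by
  intro x (hx : 0 ≤ x) y (hy : 0 ≤ y) hxy
  have hy_pos : 0 < 1 - √(2 / (y ^ 2 + 2)) := by
    simpa using sqrt_two_div_sq_add_two_lt le_rfl (hx.trans_lt hxy)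
  calc fStat x = x * (1 - √(2 / (x ^ 2 + 2))) := fStat_eq_mul hx
    _ ≤ x * (1 - √(2 / (y ^ 2 + 2))) := by gcongr
    _ < y * (1 - √(2 / (y ^ 2 + 2))) := by gcongr
    _ = fStat y := (fStat_eq_mul hy).symm

lemma fStat_eq_cube_div {b : ℝ} (hb : 0 ≤ b) :
    fStat b = b ^ 3 / (b ^ 2 + 2 + √(2 * (b ^ 2 + 2))) := by
  have hs : √(2 * (b ^ 2 + 2)) ^ 2 = 2 * (b ^ 2 + 2) := sq_sqrt (by positivity)
  have hroot : √(2 * b ^ 2 / (b ^ 2 + 2)) = b * √(2 * (b ^ 2 + 2)) / (b ^ 2 + 2) := by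
    rw [sqrt_eq_iff_mul_self_eq (by positivity) (by positivity)]
    field_simp
    linear_combination (-b ^ 2) * hs
  rw [fStat, hroot]
  field_simp
  linear_combination (-b) * hs

lemma fStat_le_cube_div_four {b : ℝ} (hb : 0 ≤ b) : fStat b ≤ b ^ 3 / 4 := by
  have : 2 ≤ √(2 * (b ^ 2 + 2)) := le_sqrt_of_sq_le (by nlinarith)
  rw [fStat_eq_cube_div hb]
  gcongr
  nlinarith

lemma cube_div_eight_le_fStat {b : ℝ} (hb : 0 ≤ b) (hb1 : b ≤ 1) : b ^ 3 / 8 ≤ fStat b := by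
  have : √(2 * (b ^ 2 + 2)) ≤ 3 := sqrt_le_iff.2 ⟨by norm_num, by nlinarith⟩
  rw [fStat_eq_cube_div hb]
  gcongr
  nlinarith

lemma one_div_eight_le_fStat_one : 1 / 8 ≤ fStat 1 := by
  simpa using cube_div_eight_le_fStat zero_le_one le_rfl

lemma le_one_of_fStat_le {b : ℝ} (hb : 0 ≤ b) (h : fStat b ≤ 1 / 8) : b ≤ 1 := by
  by_contra! h1
  have := fStat_strictMonoOn (mem_Ici.2 zero_le_one) (mem_Ici.2 hb) h1
  linarith [one_div_eight_le_fStat_one]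

lemma continuous_fStat : Continuous fStat := by
  unfold fStat
  fun_prop (disch := intros; positivity)

lemma exists_fStat_eq_of_le {a : ℝ} (ha : 0 ≤ a) (ha₀ : a ≤ 1 / 8) :
    ∃ b ∈ Icc 0 1, fStat b = a :=
  intermediate_value_Icc zero_le_one continuous_fStat.continuousOn
    ⟨by simpa [fStat] using ha, ha₀.trans one_div_eight_le_fStat_one⟩

lemma rpow_one_div_three_le_of_le_pow_three {x c : ℝ} (hx : 0 ≤ x) (hc : 0 ≤ c)
    (h : x ≤ c ^ 3) : x ^ ((1 : ℝ) / 3) ≤ c := by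
  rw [one_div, rpow_inv_le_iff_of_pos hx hc three_pos]
  exact_mod_cast h

lemma le_rpow_one_div_three_of_pow_three_le {x c : ℝ} (hx : 0 ≤ x) (hc : 0 ≤ c)
    (h : c ^ 3 ≤ x) : c ≤ x ^ ((1 : ℝ) / 3) := by
  rw [one_div, le_rpow_inv_iff_of_pos hc hx three_pos]
  exact_mod_cast h

theorem stationary_equation_solvability :
    StrictMonoOn fStat (Set.Ici 0) ∧
    (∀ b : ℝ, 0 < b → b ≤ 1 → b ^ 3 / 8 ≤ fStat b ∧ fStat b ≤ b ^ 3 / 4) ∧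
    (∃ a₀ : ℝ, 0 < a₀ ∧ ∀ a : ℝ, 0 < a → a ≤ a₀ →
      (∃! b : ℝ, 0 ≤ b ∧ fStat b = a) ∧
      (∀ b : ℝ, 0 ≤ b → fStat b = a →
        (4 * a) ^ ((1 : ℝ) / 3) ≤ b ∧ b ≤ (8 * a) ^ ((1 : ℝ) / 3))) := by
  refine ⟨fStat_strictMonoOn, fun b hb hb1 => ⟨cube_div_eight_le_fStat hb.le hb1,
    fStat_le_cube_div_four hb.le⟩, 1 / 8, by norm_num, fun a ha ha₀ => ?_⟩
  obtain ⟨b, ⟨hb0, -⟩, hfb⟩ := exists_fStat_eq_of_le ha.le ha₀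
  refine ⟨⟨b, ⟨hb0, hfb⟩, fun c ⟨hc0, hfc⟩ =>
    fStat_strictMonoOn.injOn hc0 hb0 (hfc.trans hfb.symm)⟩, fun c hc0 hfc => ?_⟩
  have hc1 : c ≤ 1 := le_one_of_fStat_le hc0 (hfc.trans_le ha₀)
  have hlower := cube_div_eight_le_fStat hc0 hc1
  have hupper := fStat_le_cube_div_four hc0
  exact ⟨rpow_one_div_three_le_of_le_pow_three (by positivity) hc0 (by linarith),
    le_rpow_one_div_three_of_pow_three_le (by positivity) hc0 (by linarith)⟩
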